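/- Let n, θ, λ, ζ, P_c > 0, let ε ∈ (0,1), and let c > 0. For ρ > 0 define the finite-blocklength rate r(ρ,z) = log(1+ρz)/log 2 − c·√(1 − (1+ρz)^{-2}) for z > 0, the mean rate E(ρ) = ∫_0^∞ r(ρ,z)·e^{−z} dz, and the effective energy efficiency with empty-buffer probability η(ρ) = [ −(1/(nθ))·log( ∫_0^∞ (ε + (1−ε)·exp(−nθ·r(ρ,z)))·e^{−z} dz ) ] / ( λζρ/E(ρ) + P_c ). Then η(ρ) tends to 0 as ρ tends to infinity. -/

import Mathlib

/-!
For `z > 0` the rate satisfies `-c ≤ r(ρ, z) ≤ (log (1 + ρ) + z) / log 2`, and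
`r(ρ, z) ≥ log (1 + ρ) / log 2 - c` once `z > 1`. Against the weight `e^{-z}` (total mass 1,
mean 1) the first bound traps the integral inside the logarithm in `[ε, ε + (1 - ε) e^{nθc}]`,
so the numerator of the efficiency stays bounded, while the mean rate grows like `log ρ`: it is
positive for large `ρ` and at most `(log (1 + ρ) + 1) / log 2`. Hence the denominator
`λζρ / E(ρ) + P_c` tends to infinity.
-/

open MeasureTheory Filter Set Real

section ExpWeight

lemma integrableOn_id_mul_exp_neg_Ioi : IntegrableOn (fun z : ℝ => z * exp (-z)) (Ioi 0) :=
  (GammaIntegral_convergent two_pos).congr_fun (fun z _ => by norm_num [mul_comm])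
    measurableSet_Ioi

lemma integral_id_mul_exp_neg_Ioi : ∫ z in Ioi (0 : ℝ), z * exp (-z) = 1 := by
  rw [← Gamma_two, Gamma_eq_integral two_pos]
  exact setIntegral_congr_fun measurableSet_Ioi fun z _ => by norm_num [mul_comm]

lemma integrableOn_affine_mul_exp_neg_Ioi (a b : ℝ) :
    IntegrableOn (fun z : ℝ => (a + b * z) * exp (-z)) (Ioi 0) := by
  simp only [add_mul, mul_assoc]
  exact ((integrableOn_exp_neg_Ioi 0).const_mul a).add
    (integrableOn_id_mul_exp_neg_Ioi.const_mul b)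

lemma integral_affine_mul_exp_neg_Ioi (a b : ℝ) :
    ∫ z in Ioi (0 : ℝ), (a + b * z) * exp (-z) = a + b := by
  simp only [add_mul, mul_assoc]
  rw [integral_add ((integrableOn_exp_neg_Ioi 0).const_mul a)
      (integrableOn_id_mul_exp_neg_Ioi.const_mul b), integral_const_mul, integral_const_mul,
    integral_exp_neg_Ioi_zero, integral_id_mul_exp_neg_Ioi, mul_one, mul_one]

variable {g : ℝ → ℝ}

lemma integrableOn_mul_exp_neg_Ioi_of_abs_le {a b : ℝ}
    (hg : AEStronglyMeasurable g (volume.restrict (Ioi 0)))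
    (hle : ∀ z ∈ Ioi (0 : ℝ), |g z| ≤ a + b * z) :
    IntegrableOn (fun z => g z * exp (-z)) (Ioi 0) := by
  refine (integrableOn_affine_mul_exp_neg_Ioi a b).mono' (hg.mul (by fun_prop)) ?_
  filter_upwards [ae_restrict_mem measurableSet_Ioi] with z hz
  rw [norm_mul, norm_of_nonneg (exp_pos _).le, Real.norm_eq_abs]
  exact mul_le_mul_of_nonneg_right (hle z hz) (exp_pos _).le

lemma integral_mul_exp_neg_Ioi_le {a b : ℝ} (hg : IntegrableOn (fun z => g z * exp (-z)) (Ioi 0))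
    (hle : ∀ z ∈ Ioi (0 : ℝ), g z ≤ a + b * z) :
    ∫ z in Ioi (0 : ℝ), g z * exp (-z) ≤ a + b := by
  rw [← integral_affine_mul_exp_neg_Ioi a b]
  exact setIntegral_mono_on hg (integrableOn_affine_mul_exp_neg_Ioi a b) measurableSet_Ioi
    fun z hz => mul_le_mul_of_nonneg_right (hle z hz) (exp_pos _).le

lemma le_integral_mul_exp_neg_Ioi {a : ℝ} (hg : IntegrableOn (fun z => g z * exp (-z)) (Ioi 0))
    (hle : ∀ z ∈ Ioi (0 : ℝ), a ≤ g z) :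
    a ≤ ∫ z in Ioi (0 : ℝ), g z * exp (-z) := by
  have h := setIntegral_mono_on ((integrableOn_exp_neg_Ioi 0).const_mul a) hg measurableSet_Ioi
    fun z hz => mul_le_mul_of_nonneg_right (hle z hz) (exp_pos _).le
  rwa [integral_const_mul, integral_exp_neg_Ioi_zero, mul_one] at h

lemma mul_exp_neg_one_le_integral_mul_exp_neg_Ioi {a : ℝ}
    (hg : IntegrableOn (fun z => g z * exp (-z)) (Ioi 0))
    (hnonneg : ∀ z ∈ Ioi (0 : ℝ), 0 ≤ g z) (htail : ∀ z ∈ Ioi (1 : ℝ), a ≤ g z) :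
    a * exp (-1) ≤ ∫ z in Ioi (0 : ℝ), g z * exp (-z) := by
  have hsub : Ioi (1 : ℝ) ⊆ Ioi 0 := Ioi_subset_Ioi zero_le_one
  calc a * exp (-1) = ∫ z in Ioi (1 : ℝ), a * exp (-z) := by
        rw [integral_const_mul, integral_exp_neg_Ioi]
    _ ≤ ∫ z in Ioi (1 : ℝ), g z * exp (-z) :=
        setIntegral_mono_on ((integrableOn_exp_neg_Ioi 1).const_mul a) (hg.mono_set hsub)
          measurableSet_Ioi fun z hz => mul_le_mul_of_nonneg_right (htail z hz) (exp_pos _).le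
    _ ≤ ∫ z in Ioi (0 : ℝ), g z * exp (-z) :=
        setIntegral_mono_set hg
          (ae_restrict_of_forall_mem measurableSet_Ioi fun z hz =>
            mul_nonneg (hnonneg z hz) (exp_pos _).le)
          hsub.eventuallyLE

end ExpWeight

noncomputable def fblRate (c x : ℝ) : ℝ :=
  log (1 + x) / log 2 - c * √(1 - 1 / (1 + x) ^ 2)

section FblRate

variable {c : ℝ}

lemma measurable_fblRate (c : ℝ) : Measurable (fblRate c) := by
  unfold fblRate; fun_prop

lemma sqrt_one_sub_one_div_sq_le_one (x : ℝ) : √(1 - 1 / (1 + x) ^ 2) ≤ 1 :=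
  sqrt_le_one.mpr (sub_le_self _ (by positivity))

lemma fblRate_le (hc : 0 ≤ c) (x : ℝ) : fblRate c x ≤ log (1 + x) / log 2 :=
  sub_le_self _ (by positivity)

lemma log_div_log_two_sub_le_fblRate (hc : 0 ≤ c) (x : ℝ) :
    log (1 + x) / log 2 - c ≤ fblRate c x :=
  sub_le_sub_left (mul_le_of_le_one_right hc (sqrt_one_sub_one_div_sq_le_one x)) _

lemma neg_le_fblRate (hc : 0 ≤ c) {x : ℝ} (hx : 0 ≤ x) : -c ≤ fblRate c x := by
  have : 0 ≤ log (1 + x) / log 2 := div_nonneg (log_nonneg (by linarith)) (log_pos one_lt_two).le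
  linarith [log_div_log_two_sub_le_fblRate hc x]

end FblRate

lemma log_one_add_mul_le {ρ z : ℝ} (hρ : 0 ≤ ρ) (hz : 0 ≤ z) :
    log (1 + ρ * z) ≤ log (1 + ρ) + z :=
  calc log (1 + ρ * z) ≤ log ((1 + ρ) * (1 + z)) :=
        log_le_log (by positivity) (by nlinarith)
    _ = log (1 + ρ) + log (1 + z) := log_mul (by positivity) (by positivity)
    _ ≤ log (1 + ρ) + z := by linarith [log_le_sub_one_of_pos (by positivity : 0 < 1 + z)]

noncomputable def meanRate (c ρ : ℝ) : ℝ :=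
  ∫ z in Ioi (0 : ℝ), fblRate c (ρ * z) * exp (-z)

section MeanRate

variable {c ρ : ℝ}

lemma fblRate_mul_le (hc : 0 ≤ c) (hρ : 0 ≤ ρ) {z : ℝ} (hz : 0 ≤ z) :
    fblRate c (ρ * z) ≤ log (1 + ρ) / log 2 + (log 2)⁻¹ * z :=
  calc fblRate c (ρ * z) ≤ log (1 + ρ * z) / log 2 := fblRate_le hc _
    _ ≤ (log (1 + ρ) + z) / log 2 :=
        div_le_div_of_nonneg_right (log_one_add_mul_le hρ hz) (log_pos one_lt_two).le
    _ = log (1 + ρ) / log 2 + (log 2)⁻¹ * z := by ring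

lemma integrableOn_fblRate_mul_exp_neg (hc : 0 ≤ c) (hρ : 0 ≤ ρ) :
    IntegrableOn (fun z => fblRate c (ρ * z) * exp (-z)) (Ioi 0) := by
  refine integrableOn_mul_exp_neg_Ioi_of_abs_le (a := c + log (1 + ρ) / log 2) (b := (log 2)⁻¹)
    ((measurable_fblRate c).comp (measurable_const_mul ρ)).aestronglyMeasurable
    fun z hz => abs_le.mpr ⟨?_, ?_⟩
  · have : 0 ≤ log (1 + ρ) / log 2 + (log 2)⁻¹ * z := by
      have := log_nonneg (by linarith : (1 : ℝ) ≤ 1 + ρ)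
      have := log_pos one_lt_two
      have : (0 : ℝ) < z := hz
      positivity
    linarith [neg_le_fblRate hc (mul_nonneg hρ hz.le)]
  · linarith [fblRate_mul_le hc hρ hz.le]

lemma meanRate_le (hc : 0 ≤ c) (hρ : 0 ≤ ρ) : meanRate c ρ ≤ (log (1 + ρ) + 1) / log 2 := by
  rw [add_div, div_eq_mul_inv 1, one_mul]
  exact integral_mul_exp_neg_Ioi_le (integrableOn_fblRate_mul_exp_neg hc hρ)
    fun z hz => fblRate_mul_le hc hρ (le_of_lt hz)

lemma log_one_add_div_log_two_mul_exp_neg_one_sub_le_meanRate (hc : 0 ≤ c) (hρ : 0 ≤ ρ) :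
    log (1 + ρ) / log 2 * exp (-1) - c ≤ meanRate c ρ := by
  have hint := integrableOn_fblRate_mul_exp_neg hc hρ
  -- shifting the rate by `c` makes it nonnegative
  have hshift : ∫ z in Ioi (0 : ℝ), (fblRate c (ρ * z) + c) * exp (-z) = meanRate c ρ + c := by
    simp only [add_mul]
    rw [integral_add hint ((integrableOn_exp_neg_Ioi 0).const_mul c), integral_const_mul,
      integral_exp_neg_Ioi_zero, mul_one, meanRate]
  have hbound := mul_exp_neg_one_le_integral_mul_exp_neg_Ioi
    (g := fun z => fblRate c (ρ * z) + c) (a := log (1 + ρ) / log 2)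
    (by simp only [add_mul]; exact hint.add ((integrableOn_exp_neg_Ioi 0).const_mul c))
    (fun z hz => by linarith [neg_le_fblRate hc (mul_nonneg hρ (le_of_lt hz))])
    (fun z hz => by
      have hz : (1 : ℝ) < z := hz
      have hlog : log (1 + ρ) ≤ log (1 + ρ * z) := log_le_log (by linarith) (by nlinarith)
      have := log_div_log_two_sub_le_fblRate hc (ρ * z)
      have := div_le_div_of_nonneg_right hlog (log_pos one_lt_two).le
      linarith)
  linarith

lemma tendsto_meanRate_atTop (hc : 0 ≤ c) : Tendsto (meanRate c) atTop atTop := by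
  refine tendsto_atTop_mono' atTop ?_ (tendsto_atTop_add_const_right _ (-c)
    (((tendsto_log_atTop.comp (tendsto_atTop_add_const_left atTop 1 tendsto_id)).atTop_div_const
      (log_pos one_lt_two)).atTop_mul_const (exp_pos (-1))))
  filter_upwards [eventually_ge_atTop 0] with ρ hρ
  exact sub_eq_add_neg _ c ▸ log_one_add_div_log_two_mul_exp_neg_one_sub_le_meanRate hc hρ

lemma tendsto_div_log_one_add_add_one_atTop :
    Tendsto (fun ρ : ℝ => ρ / (log (1 + ρ) + 1)) atTop atTop := by
  have hlittle : (fun ρ : ℝ => log (1 + ρ) + 1) =o[atTop] fun ρ => ρ := by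
    refine Asymptotics.IsLittleO.add ?_ (Asymptotics.isLittleO_const_id_atTop 1)
    exact (isLittleO_log_id_atTop.comp_tendsto
      (tendsto_atTop_add_const_left atTop 1 tendsto_id)).trans_isBigO
      ((Asymptotics.isLittleO_const_id_atTop 1).isBigO.add (Asymptotics.isBigO_refl _ _))
  have hpos : ∀ᶠ ρ in atTop, (log (1 + ρ) + 1) / ρ ∈ Ioi 0 := by
    filter_upwards [eventually_gt_atTop 0] with ρ hρ
    have := log_nonneg (by linarith : (1 : ℝ) ≤ 1 + ρ)
    exact div_pos (by linarith) hρ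
  simpa only [Pi.inv_def, inv_div] using
    (tendsto_nhdsWithin_iff.mpr ⟨hlittle.tendsto_div_nhds_zero, hpos⟩).inv_tendsto_nhdsGT_zero

lemma tendsto_div_meanRate_atTop (hc : 0 ≤ c) :
    Tendsto (fun ρ => ρ / meanRate c ρ) atTop atTop := by
  refine tendsto_atTop_mono' atTop ?_
    (tendsto_div_log_one_add_add_one_atTop.const_mul_atTop (log_pos one_lt_two))
  filter_upwards [(tendsto_meanRate_atTop hc).eventually_gt_atTop 0, eventually_gt_atTop 0]
    with ρ hE hρ
  calc log 2 * (ρ / (log (1 + ρ) + 1)) = ρ / ((log (1 + ρ) + 1) / log 2) := by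
        field_simp
    _ ≤ ρ / meanRate c ρ := div_le_div_of_nonneg_left hρ.le hE (meanRate_le hc hρ.le)

end MeanRate

lemma abs_log_integral_mul_exp_neg_Ioi_le {g : ℝ → ℝ} {a c ε : ℝ} (hg : Measurable g)
    (ha : 0 ≤ a) (hε0 : 0 < ε) (hε1 : ε ≤ 1) (hgc : ∀ z ∈ Ioi (0 : ℝ), -c ≤ g z) :
    |log (∫ z in Ioi (0 : ℝ), (ε + (1 - ε) * exp (-(a * g z))) * exp (-z))|
      ≤ max |log ε| |log (ε + (1 - ε) * exp (a * c))| := by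
  have hlow : ∀ z, ε ≤ ε + (1 - ε) * exp (-(a * g z)) := fun z =>
    le_add_of_nonneg_right (mul_nonneg (by linarith) (exp_pos _).le)
  have hup : ∀ z ∈ Ioi (0 : ℝ), ε + (1 - ε) * exp (-(a * g z)) ≤ ε + (1 - ε) * exp (a * c) :=
    fun z hz => by
      have : -(a * g z) ≤ a * c := by nlinarith [hgc z hz]
      gcongr
  have hint : IntegrableOn (fun z => (ε + (1 - ε) * exp (-(a * g z))) * exp (-z)) (Ioi 0) :=
    integrableOn_mul_exp_neg_Ioi_of_abs_le (b := 0) (by fun_prop) fun z hz => by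
      rw [zero_mul, add_zero, abs_of_nonneg (hε0.le.trans (hlow z))]
      exact hup z hz
  have hI_low := le_integral_mul_exp_neg_Ioi hint fun z _ => hlow z
  have hI_up := integral_mul_exp_neg_Ioi_le (b := 0) hint fun z hz => by
    rw [zero_mul, add_zero]; exact hup z hz
  rw [add_zero] at hI_up
  exact abs_le_max_abs_abs (log_le_log hε0 hI_low) (log_le_log (hε0.trans_le hI_low) hI_up)

theorem eee_ebp_tendsto_zero_at_top_general
    (n θ lam ζ Pc c ε : ℝ)
    (hn : 0 < n) (hθ : 0 < θ) (hlam : 0 < lam) (hζ : 0 < ζ)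
    (hc : 0 < c) (hε : ε ∈ Set.Ioo (0:ℝ) 1)
    (r : ℝ → ℝ → ℝ)
    (hr : ∀ ρ ∈ Set.Ioi (0:ℝ), ∀ z ∈ Set.Ioi (0:ℝ),
      r ρ z = Real.log (1 + ρ * z) / Real.log 2
        - c * Real.sqrt (1 - 1 / (1 + ρ * z) ^ 2))
    (E : ℝ → ℝ)
    (hE : ∀ ρ ∈ Set.Ioi (0:ℝ), E ρ = ∫ z in Set.Ioi (0:ℝ), r ρ z * Real.exp (-z))
    (η : ℝ → ℝ)
    (hη : ∀ ρ ∈ Set.Ioi (0:ℝ), η ρ =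
      (-(1 / (n * θ)) * Real.log (∫ z in Set.Ioi (0:ℝ),
          (ε + (1 - ε) * Real.exp (-(n * θ * r ρ z))) * Real.exp (-z)))
        / (lam * ζ * ρ / E ρ + Pc)) :
    Tendsto η atTop (nhds 0) := by
  set M := |1 / (n * θ)| * max |log ε| |log (ε + (1 - ε) * exp (n * θ * c))|
  have hrate : ∀ ρ ∈ Ioi (0 : ℝ), EqOn (r ρ) (fun z => fblRate c (ρ * z)) (Ioi 0) := hr
  have hmean : ∀ ρ ∈ Ioi (0 : ℝ), E ρ = meanRate c ρ := fun ρ hρ =>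
    (hE ρ hρ).trans (setIntegral_congr_fun measurableSet_Ioi fun z hz => by rw [hrate ρ hρ hz])
  have hnum : ∀ ρ ∈ Ioi (0 : ℝ), |-(1 / (n * θ)) * log (∫ z in Ioi (0 : ℝ),
      (ε + (1 - ε) * exp (-(n * θ * r ρ z))) * exp (-z))| ≤ M := fun ρ hρ => by
    rw [abs_mul, abs_neg, setIntegral_congr_fun measurableSet_Ioi fun z hz => by
      rw [hrate ρ hρ hz]]
    exact mul_le_mul_of_nonneg_left (abs_log_integral_mul_exp_neg_Ioi_le
      ((measurable_fblRate c).comp (measurable_const_mul ρ)) (mul_pos hn hθ).le hε.1 hε.2.le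
      fun z hz => neg_le_fblRate hc.le (mul_nonneg (le_of_lt hρ) (le_of_lt hz))) (abs_nonneg _)
  have hden : Tendsto (fun ρ => lam * ζ * ρ / E ρ + Pc) atTop atTop := by
    refine tendsto_atTop_add_const_right _ Pc (((tendsto_div_meanRate_atTop hc.le).const_mul_atTop
      (mul_pos hlam hζ)).congr' ?_)
    filter_upwards [eventually_gt_atTop 0] with ρ hρ
    rw [hmean ρ hρ, mul_div_assoc]
  refine squeeze_zero_norm' (a := fun ρ => M / (lam * ζ * ρ / E ρ + Pc)) ?_
    (tendsto_const_nhds.div_atTop hden)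
  filter_upwards [hden.eventually_gt_atTop 0, eventually_gt_atTop 0] with ρ hD hρ
  rw [hη ρ hρ, norm_div, Real.norm_eq_abs, Real.norm_of_nonneg hD.le]
  exact div_le_div_of_nonneg_right (hnum ρ hρ) hD.le

/-- The effective energy efficiency with empty-buffer probability tends to 0
as the SNR ρ tends to infinity. -/
theorem eee_ebp_tendsto_zero_at_top
    (n θ lam ζ Pc c ε : ℝ)
    (hn : 0 < n) (hθ : 0 < θ) (hlam : 0 < lam) (hζ : 0 < ζ) (hPc : 0 < Pc)
    (hc : 0 < c) (hε : ε ∈ Set.Ioo (0:ℝ) 1)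
    (r : ℝ → ℝ → ℝ)
    (hr : ∀ ρ ∈ Set.Ioi (0:ℝ), ∀ z ∈ Set.Ioi (0:ℝ),
      r ρ z = Real.log (1 + ρ * z) / Real.log 2
        - c * Real.sqrt (1 - 1 / (1 + ρ * z) ^ 2))
    (E : ℝ → ℝ)
    (hE : ∀ ρ ∈ Set.Ioi (0:ℝ), E ρ = ∫ z in Set.Ioi (0:ℝ), r ρ z * Real.exp (-z))
    (η : ℝ → ℝ)
    (hη : ∀ ρ ∈ Set.Ioi (0:ℝ), η ρ =
      (-(1 / (n * θ)) * Real.log (∫ z in Set.Ioi (0:ℝ),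
          (ε + (1 - ε) * Real.exp (-(n * θ * r ρ z))) * Real.exp (-z)))
        / (lam * ζ * ρ / E ρ + Pc)) :
    Tendsto η atTop (nhds 0) :=
  eee_ebp_tendsto_zero_at_top_general n θ lam ζ Pc c ε hn hθ hlam hζ hc hε r hr E hE η hη
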